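/- Let l ≥ 1 and let F_l : ℂ³ → ℂ³ be the map F_l(x, y, z) = (x³ + y^l x + zx, y, z). Then each of the three polynomial vector fields η_1(X, Y, Z) = (3lX, 2Y, 2lZ), η_2(X, Y, Z) = (0, 1, −lY^{l−1}), and η_3(X, Y, Z) = (2(Z + Y^l)², 0, −9X) is liftable over F_l; explicit lifts are ξ_1(x,y,z) = (lx, 2y, 2lz), ξ_2(x,y,z) = (0, 1, −ly^{l−1}), and ξ_3(x,y,z) = (3x² + 2(y^l + z), 0, −9(x³ + y^l x + zx)). -/

import Mathlib

/-!
Write `u = yˡ + z`, so that `F_l(x, y, z) = (x³ + u x, y, z)` and the first component of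
`dF_l(a, b, c)` is `(3x² + u) a + x du(b, c)` with `du(b, c) = l yˡ⁻¹ b + c`.
`ξ₁` is the Euler field of the weights `(l, 2, 2l)`, for which `F_l` is weighted homogeneous
with target weights `(3l, 2, 2l)`; `ξ₂` moves `y` at unit speed while keeping `u` constant;
`ξ₃` is the lift of the discriminant field of the cusp `x³ + u x`, the identity behind it being
`(3x² + u)(3x² + 2u) - 9x(x³ + u x) = 2u²`.
-/

open Filter Topology

/-- `η` is liftable over `f`: there is a map `ξ`, analytic on a neighbourhood of `0`,
with `df ∘ ξ = η ∘ f` near `0`. -/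
def Liftable {E F : Type*} [NormedAddCommGroup E] [NormedSpace ℂ E]
    [NormedAddCommGroup F] [NormedSpace ℂ F] (f : E → F) (η : F → F) : Prop :=
  ∃ ξ : E → E, (∀ᶠ x in 𝓝 0, AnalyticAt ℂ ξ x) ∧
    ∀ᶠ x in 𝓝 0, fderiv ℂ f x (ξ x) = η (f x)

open scoped ContDiff

theorem Liftable.of_forall {E F : Type*} [NormedAddCommGroup E] [NormedSpace ℂ E]
    [NormedAddCommGroup F] [NormedSpace ℂ F] {f : E → F} {η : F → F} (ξ : E → E)
    (hξ : ContDiff ℂ ω ξ) (h : ∀ x, fderiv ℂ f x (ξ x) = η (f x)) : Liftable f η :=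
  ⟨ξ, .of_forall fun _ => hξ.contDiffAt.analyticAt, .of_forall h⟩

theorem natCast_mul_pow_pred_mul_self {R : Type*} [Semiring R] (l : ℕ) (y : R) :
    (l : R) * y ^ (l - 1) * y = l * y ^ l := by
  cases l with
  | zero => simp
  | succ m => rw [Nat.add_sub_cancel, mul_assoc, ← pow_succ]

section CuspUnfolding

variable {𝕜 : Type*} [NontriviallyNormedField 𝕜]

def cuspUnfolding (l : ℕ) (p : 𝕜 × 𝕜 × 𝕜) : 𝕜 × 𝕜 × 𝕜 :=
  (p.1 ^ 3 + p.2.1 ^ l * p.1 + p.2.2 * p.1, p.2.1, p.2.2)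

theorem fderiv_cuspUnfolding_apply (l : ℕ) (x y z a b c : 𝕜) :
    fderiv 𝕜 (cuspUnfolding l) (x, y, z) (a, b, c) =
      ((3 * x ^ 2 + y ^ l + z) * a + x * (l * y ^ (l - 1) * b + c), b, c) := by
  unfold cuspUnfolding
  rw [DifferentiableAt.fderiv_prodMk (by fun_prop) (by fun_prop)]
  simp (disch := fun_prop) [fderiv_fun_add, fderiv_fun_mul, fderiv_fun_pow, fderiv.fst,
    fderiv.snd]
  ring

theorem fderiv_cuspUnfolding_eulerField (l : ℕ) (x y z : 𝕜) :
    fderiv 𝕜 (cuspUnfolding l) (x, y, z) (l * x, 2 * y, 2 * l * z) =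
      (3 * l * (x ^ 3 + y ^ l * x + z * x), 2 * y, 2 * l * z) := by
  rw [fderiv_cuspUnfolding_apply]
  congr 1
  linear_combination 2 * x * natCast_mul_pow_pred_mul_self l y

theorem fderiv_cuspUnfolding_levelField (l : ℕ) (x y z : 𝕜) :
    fderiv 𝕜 (cuspUnfolding l) (x, y, z) (0, 1, -l * y ^ (l - 1)) =
      (0, 1, -l * y ^ (l - 1)) := by
  rw [fderiv_cuspUnfolding_apply]
  congr 1
  ring

theorem fderiv_cuspUnfolding_discriminantField (l : ℕ) (x y z : 𝕜) :
    fderiv 𝕜 (cuspUnfolding l) (x, y, z)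
        (3 * x ^ 2 + 2 * (y ^ l + z), 0, -9 * (x ^ 3 + y ^ l * x + z * x)) =
      (2 * (z + y ^ l) ^ 2, 0, -9 * (x ^ 3 + y ^ l * x + z * x)) := by
  rw [fderiv_cuspUnfolding_apply]
  congr 1
  ring

end CuspUnfolding

theorem lift_of_two_parameter_unfolding_of_cusp_general
    (l : ℕ)
    (F : ℂ × ℂ × ℂ → ℂ × ℂ × ℂ)
    (hF : ∀ x y z : ℂ, F (x, y, z) = (x ^ 3 + y ^ l * x + z * x, y, z))
    (η₁ η₂ η₃ : ℂ × ℂ × ℂ → ℂ × ℂ × ℂ)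
    (hη₁ : ∀ X Y Z : ℂ, η₁ (X, Y, Z) = (3 * (l : ℂ) * X, 2 * Y, 2 * (l : ℂ) * Z))
    (hη₂ : ∀ X Y Z : ℂ, η₂ (X, Y, Z) = (0, 1, -(l : ℂ) * Y ^ (l - 1)))
    (hη₃ : ∀ X Y Z : ℂ, η₃ (X, Y, Z) = (2 * (Z + Y ^ l) ^ 2, 0, -9 * X)) :
    (∀ x y z : ℂ, fderiv ℂ F (x, y, z) ((l : ℂ) * x, 2 * y, 2 * (l : ℂ) * z)
      = η₁ (F (x, y, z))) ∧
    (∀ x y z : ℂ, fderiv ℂ F (x, y, z) (0, 1, -(l : ℂ) * y ^ (l - 1))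
      = η₂ (F (x, y, z))) ∧
    (∀ x y z : ℂ, fderiv ℂ F (x, y, z)
      (3 * x ^ 2 + 2 * (y ^ l + z), 0, -9 * (x ^ 3 + y ^ l * x + z * x))
      = η₃ (F (x, y, z))) ∧
    Liftable F η₁ ∧ Liftable F η₂ ∧ Liftable F η₃ := by
  obtain rfl : F = cuspUnfolding l := funext fun ⟨x, y, z⟩ => hF x y z
  obtain rfl : η₁ = fun p : ℂ × ℂ × ℂ => (3 * l * p.1, 2 * p.2.1, 2 * l * p.2.2) :=
    funext fun ⟨X, Y, Z⟩ => hη₁ X Y Z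
  obtain rfl : η₂ = fun p : ℂ × ℂ × ℂ => (0, 1, -l * p.2.1 ^ (l - 1)) :=
    funext fun ⟨X, Y, Z⟩ => hη₂ X Y Z
  obtain rfl : η₃ = fun p : ℂ × ℂ × ℂ => (2 * (p.2.2 + p.2.1 ^ l) ^ 2, 0, -9 * p.1) :=
    funext fun ⟨X, Y, Z⟩ => hη₃ X Y Z
  refine ⟨fderiv_cuspUnfolding_eulerField l, fderiv_cuspUnfolding_levelField l,
    fderiv_cuspUnfolding_discriminantField l, ?_, ?_, ?_⟩
  · exact .of_forall (fun p => (l * p.1, 2 * p.2.1, 2 * l * p.2.2)) (by fun_prop)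
      fun ⟨x, y, z⟩ => fderiv_cuspUnfolding_eulerField l x y z
  · exact .of_forall (fun p => (0, 1, -l * p.2.1 ^ (l - 1))) (by fun_prop)
      fun ⟨x, y, z⟩ => fderiv_cuspUnfolding_levelField l x y z
  · exact .of_forall (fun p => (3 * p.1 ^ 2 + 2 * (p.2.1 ^ l + p.2.2), 0,
        -9 * (p.1 ^ 3 + p.2.1 ^ l * p.1 + p.2.2 * p.1))) (by fun_prop)
      fun ⟨x, y, z⟩ => fderiv_cuspUnfolding_discriminantField l x y z

/-- Example 4.11 ii): for `F_l(x,y,z) = (x³ + yˡx + zx, y, z)`, the vector fields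
`η₁(X,Y,Z) = (3lX, 2Y, 2lZ)`, `η₂(X,Y,Z) = (0, 1, −lY^{l−1})` and
`η₃(X,Y,Z) = (2(Z+Yˡ)², 0, −9X)` are liftable over `F_l`, with the explicit lifts
`ξ₁ = (lx, 2y, 2lz)`, `ξ₂ = (0, 1, −ly^{l−1})`,
`ξ₃ = (3x² + 2(yˡ+z), 0, −9(x³ + yˡx + zx))`. -/
theorem lift_of_two_parameter_unfolding_of_cusp
    (l : ℕ) (hl : 1 ≤ l)
    (F : ℂ × ℂ × ℂ → ℂ × ℂ × ℂ)
    (hF : ∀ x y z : ℂ, F (x, y, z) = (x ^ 3 + y ^ l * x + z * x, y, z))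
    (η₁ η₂ η₃ : ℂ × ℂ × ℂ → ℂ × ℂ × ℂ)
    (hη₁ : ∀ X Y Z : ℂ, η₁ (X, Y, Z) = (3 * (l : ℂ) * X, 2 * Y, 2 * (l : ℂ) * Z))
    (hη₂ : ∀ X Y Z : ℂ, η₂ (X, Y, Z) = (0, 1, -(l : ℂ) * Y ^ (l - 1)))
    (hη₃ : ∀ X Y Z : ℂ, η₃ (X, Y, Z) = (2 * (Z + Y ^ l) ^ 2, 0, -9 * X)) :
    (∀ x y z : ℂ, fderiv ℂ F (x, y, z) ((l : ℂ) * x, 2 * y, 2 * (l : ℂ) * z)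
      = η₁ (F (x, y, z))) ∧
    (∀ x y z : ℂ, fderiv ℂ F (x, y, z) (0, 1, -(l : ℂ) * y ^ (l - 1))
      = η₂ (F (x, y, z))) ∧
    (∀ x y z : ℂ, fderiv ℂ F (x, y, z)
      (3 * x ^ 2 + 2 * (y ^ l + z), 0, -9 * (x ^ 3 + y ^ l * x + z * x))
      = η₃ (F (x, y, z))) ∧
    Liftable F η₁ ∧ Liftable F η₂ ∧ Liftable F η₃ :=
  lift_of_two_parameter_unfolding_of_cusp_general l F hF η₁ η₂ η₃ hη₁ hη₂ hη₃
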